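/- Let N : C([−r₀,0];ℝᵈ) → ℝᵈ satisfy: N(0) = 0, N is monotone (ξ ≤ η implies N(ξ) ≤ N(η)), and there is κ ∈ (0,1) with |N(ξ) − N(η)| ≤ κ max_{1≤i≤d} ‖ξⁱ − ηⁱ‖_∞ for all ξ, η. Let Y, Ȳ : [−r₀, ∞) → ℝᵈ be continuous with segment processes Y_t, Ȳ_t (Y_t(s) = Y(t+s), s ∈ [−r₀,0]), and set Yᴺ(t) = Y(t) − N(Y_t), Ȳᴺ(t) = Ȳ(t) − N(Ȳ_t). Suppose Y_0 ≤ Ȳ_0 and Yᴺ(0) ≤ Ȳᴺ(0). Define τⁱ = inf{t > 0 : Yⁱ(t) > Ȳⁱ(t)}, τ_Nⁱ = inf{t > 0 : Y^{i,N}(t) > Ȳ^{i,N}(t)}, τ = min_i τⁱ, τ_N = min_i τ_Nⁱ. Then τ_N ≤ τ. -/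

import Mathlib

open Set

/-- The segment at time `t` of a path `Y : ℝ → ℝᵈ`, viewed as a function on `[-r₀, 0]`. -/
def seg {d : ℕ} (r₀ : ℝ) (Y : ℝ → Fin d → ℝ) (t : ℝ) :
    (Set.Icc (-r₀) (0:ℝ)) → (Fin d → ℝ) :=
  fun s => Y (t + s)

/-!
Suppose `Y` crosses `Ȳ` at a time `r` before the `N`-transformed paths cross. Let `B > 0` be the
largest excess `Yⁱ(u) - Ȳⁱ(u)` over `u ∈ [0, r]` and all coordinates, attained at `(u₀, i₀)`.
On the whole window `[-r₀, r]` we have `Y ≤ Ȳ + B`, so monotonicity and contractivity of `N` give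
`Nⁱ⁰(Y_{u₀}) - Nⁱ⁰(Ȳ_{u₀}) ≤ κ B`; since the transformed paths have not crossed at `u₀`,
`B = Yⁱ⁰(u₀) - Ȳⁱ⁰(u₀) ≤ κ B`, which is impossible for `κ < 1`.
-/

/-- `⊤` when `f` never exceeds `g` at positive times, since `sInf ∅ = ⊤` in `EReal`. -/
noncomputable def crossingTime (f g : ℝ → ℝ) : EReal :=
  sInf {t : EReal | ∃ r : ℝ, t = (r : EReal) ∧ 0 < r ∧ f r > g r}

lemma crossingTime_le {f g : ℝ → ℝ} {r : ℝ} (hr : 0 < r) (hfg : g r < f r) :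
    crossingTime f g ≤ r :=
  sInf_le ⟨r, rfl, hr, hfg⟩

lemma le_crossingTime {f g : ℝ → ℝ} {t : EReal} (h : ∀ r : ℝ, 0 < r → g r < f r → t ≤ r) :
    t ≤ crossingTime f g :=
  le_sInf fun _ ⟨r, hr, hpos, hfg⟩ => hr ▸ h r hpos hfg

lemma le_of_lt_crossingTime {f g : ℝ → ℝ} {r u : ℝ} (hr : (r : EReal) < crossingTime f g)
    (hu : 0 < u) (hur : u ≤ r) : f u ≤ g u := by
  by_contra! hgu
  exact (hr.trans_le (crossingTime_le hu hgu)).not_ge (EReal.coe_le_coe_iff.mpr hur)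

lemma neutral_sub_le_mul_of_le_add {S ι : Type*} [Fintype ι] {κ : ℝ} {N : (S → ι → ℝ) → ι → ℝ}
    (hNmono : ∀ ξ η, (∀ s i, ξ s i ≤ η s i) → ∀ i, N ξ i ≤ N η i)
    (hNlip : ∀ ξ η (B : ℝ), (∀ s i, |ξ s i - η s i| ≤ B) →
      Real.sqrt (∑ i, (N ξ i - N η i) ^ 2) ≤ κ * B)
    {ξ η : S → ι → ℝ} {B : ℝ} (hB : 0 ≤ B) (hξη : ∀ s i, ξ s i ≤ η s i + B) (i : ι) :
    N ξ i - N η i ≤ κ * B := by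
  set ηB : S → ι → ℝ := fun s j => η s j + B
  calc N ξ i - N η i ≤ N ηB i - N η i := by gcongr; exact hNmono ξ ηB hξη i
    _ ≤ Real.sqrt (∑ j, (N ηB j - N η j) ^ 2) :=
      (le_abs_self _).trans <| Real.abs_le_sqrt <|
        Finset.single_le_sum (fun j _ => sq_nonneg (N ηB j - N η j)) (Finset.mem_univ i)
    _ ≤ κ * B := hNlip ηB η B fun s j => by simp [ηB, abs_of_nonneg hB]

lemma le_of_neutral_le {d : ℕ} {r₀ r κ : ℝ} (hκ : κ < 1)
    {N : ((Icc (-r₀) (0:ℝ)) → (Fin d → ℝ)) → (Fin d → ℝ)}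
    (hNmono : ∀ ξ η, (∀ s i, ξ s i ≤ η s i) → ∀ i, N ξ i ≤ N η i)
    (hNlip : ∀ ξ η (B : ℝ), (∀ s i, |ξ s i - η s i| ≤ B) →
      Real.sqrt (∑ i, (N ξ i - N η i) ^ 2) ≤ κ * B)
    {Y Ybar : ℝ → Fin d → ℝ} (hY : Continuous Y) (hYbar : Continuous Ybar)
    (hinit : ∀ s ∈ Icc (-r₀) (0:ℝ), ∀ i, Y s i ≤ Ybar s i)
    (hneutral : ∀ u ∈ Icc 0 r, ∀ i,
      Y u i - N (seg r₀ Y u) i ≤ Ybar u i - N (seg r₀ Ybar u) i) :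
    ∀ u ∈ Icc 0 r, ∀ i, Y u i ≤ Ybar u i := by
  by_contra! ⟨u, hu, i, hcross⟩
  set excess : ℝ × Fin d → ℝ := fun p => Y p.1 p.2 - Ybar p.1 p.2
  have hcont : Continuous excess := continuous_prod_of_discrete_right.mpr fun j =>
    ((continuous_apply j).comp hY).sub ((continuous_apply j).comp hYbar)
  obtain ⟨⟨u₀, i₀⟩, ⟨hu₀, -⟩, hmax⟩ := (isCompact_Icc.prod isCompact_univ).exists_isMaxOn
    ⟨(u, i), hu, mem_univ i⟩ hcont.continuousOn
  set B := excess (u₀, i₀)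
  have hBpos : 0 < B :=
    (sub_pos.mpr hcross).trans_le (hmax (show (u, i) ∈ _ from ⟨hu, mem_univ i⟩))
  have hwindow : ∀ v ∈ Icc (-r₀) r, ∀ j, Y v j ≤ Ybar v j + B := by
    intro v ⟨hv₁, hv₂⟩ j
    rcases le_or_gt v 0 with hv | hv
    · linarith [hinit v ⟨hv₁, hv⟩ j]
    · linarith [show excess (v, j) ≤ B from hmax ⟨⟨hv.le, hv₂⟩, mem_univ j⟩]
  have hN : N (seg r₀ Y u₀) i₀ - N (seg r₀ Ybar u₀) i₀ ≤ κ * B :=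
    neutral_sub_le_mul_of_le_add hNmono hNlip hBpos.le
      (fun s j => hwindow _ ⟨by linarith [s.2.1, hu₀.1], by linarith [s.2.2, hu₀.2]⟩ j) i₀
  have hB : B ≤ κ * B := by linarith [hneutral u₀ hu₀ i₀]
  nlinarith

theorem tauN_le_tau_general (d : ℕ) (r₀ : ℝ) (κ : ℝ) (hκ : κ ∈ Set.Ioo (0:ℝ) 1)
    (N : ((Set.Icc (-r₀) (0:ℝ)) → (Fin d → ℝ)) → (Fin d → ℝ))
    (hNmono : ∀ ξ η, (∀ s i, ξ s i ≤ η s i) → ∀ i, N ξ i ≤ N η i)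
    (hNlip : ∀ ξ η (B : ℝ), (∀ s i, |ξ s i - η s i| ≤ B) →
      Real.sqrt (∑ i, (N ξ i - N η i) ^ 2) ≤ κ * B)
    (Y Ybar : ℝ → Fin d → ℝ) (hY : Continuous Y) (hYbar : Continuous Ybar)
    (hinit : ∀ s ∈ Set.Icc (-r₀) (0:ℝ), ∀ i, Y s i ≤ Ybar s i)
    (hinitN : ∀ i, Y 0 i - N (seg r₀ Y 0) i ≤ Ybar 0 i - N (seg r₀ Ybar 0) i) :
    (⨅ i : Fin d, sInf {t : EReal | ∃ r : ℝ, t = (r : EReal) ∧ 0 < r ∧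
        Y r i - N (seg r₀ Y r) i > Ybar r i - N (seg r₀ Ybar r) i})
      ≤ ⨅ i : Fin d, sInf {t : EReal | ∃ r : ℝ, t = (r : EReal) ∧ 0 < r ∧
        Y r i > Ybar r i} := by
  change (⨅ j, crossingTime (fun r => Y r j - N (seg r₀ Y r) j)
      (fun r => Ybar r j - N (seg r₀ Ybar r) j)) ≤
    ⨅ i, crossingTime (fun r => Y r i) (fun r => Ybar r i)
  refine le_iInf fun i => le_crossingTime fun r hr hcross => ?_
  by_contra! hτN
  have hneutral : ∀ u ∈ Icc 0 r, ∀ j,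
      Y u j - N (seg r₀ Y u) j ≤ Ybar u j - N (seg r₀ Ybar u) j := by
    intro u ⟨hu₀, hur⟩ j
    rcases hu₀.eq_or_lt with rfl | hu
    · exact hinitN j
    · exact le_of_lt_crossingTime (hτN.trans_le (iInf_le _ j)) hu hur
  exact hcross.not_ge (le_of_neutral_le hκ.2 hNmono hNlip hY hYbar hinit hneutral r
    ⟨hr.le, le_rfl⟩ i)

/-- Proposition 3 (cf. [HY, Prop. 4.3]): the first crossing time of the
`N`-transformed processes is no later than the first crossing time of the
processes themselves. Infima are taken in `EReal`, so `inf ∅ = ⊤`. -/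
theorem tauN_le_tau (d : ℕ) (r₀ : ℝ) (hr : 0 ≤ r₀) (κ : ℝ) (hκ : κ ∈ Set.Ioo (0:ℝ) 1)
    (N : ((Set.Icc (-r₀) (0:ℝ)) → (Fin d → ℝ)) → (Fin d → ℝ))
    (hN0 : N (fun _ _ => 0) = 0)
    (hNmono : ∀ ξ η, (∀ s i, ξ s i ≤ η s i) → ∀ i, N ξ i ≤ N η i)
    (hNlip : ∀ ξ η (B : ℝ), (∀ s i, |ξ s i - η s i| ≤ B) →
      Real.sqrt (∑ i, (N ξ i - N η i) ^ 2) ≤ κ * B)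
    (Y Ybar : ℝ → Fin d → ℝ) (hY : Continuous Y) (hYbar : Continuous Ybar)
    (hinit : ∀ s ∈ Set.Icc (-r₀) (0:ℝ), ∀ i, Y s i ≤ Ybar s i)
    (hinitN : ∀ i, Y 0 i - N (seg r₀ Y 0) i ≤ Ybar 0 i - N (seg r₀ Ybar 0) i) :
    (⨅ i : Fin d, sInf {t : EReal | ∃ r : ℝ, t = (r : EReal) ∧ 0 < r ∧
        Y r i - N (seg r₀ Y r) i > Ybar r i - N (seg r₀ Ybar r) i})
      ≤ ⨅ i : Fin d, sInf {t : EReal | ∃ r : ℝ, t = (r : EReal) ∧ 0 < r ∧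
        Y r i > Ybar r i} :=
  tauN_le_tau_general d r₀ κ hκ N hNmono hNlip Y Ybar hY hYbar hinit hinitN
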